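/- Shannon entropy of the transformed density equals minus α times the Kullback-Leibler divergence: S[f_α^{[h]}] = −α D[f||h], i.e., −∫ f_α^{[h]}(y) log f_α^{[h]}(y) dy = −α ∫_Ω f(x) log(f(x)/h(x)) dx. -/
import Mathlib


open MeasureTheory Set Real

/-- Shannon entropy of the transformed density equals −α times the Kullback-Leibler
divergence: S[f_α^{[h]}] = −α D[f||h], expressed by the change of variables as
−∫_Ω (f/h)^α log((f/h)^α) · f^{1-α} h^α dx = −α ∫_Ω f log(f/h) dx. -/
theorem Shannon_entropy_of_transformed_density
    (xi xf : ℝ) (f h : ℝ → ℝ) (α : ℝ)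
    (hposf : ∀ x ∈ Set.Ioo xi xf, 0 < f x)
    (hposh : ∀ x ∈ Set.Ioo xi xf, 0 < h x)
    (hf : ∫ x in Set.Ioo xi xf, f x = 1)
    (hh : ∫ x in Set.Ioo xi xf, h x = 1) :
    -∫ x in Set.Ioo xi xf,
        (f x / h x) ^ α * Real.log ((f x / h x) ^ α) * ((f x) ^ (1 - α) * (h x) ^ α)
      = -α * ∫ x in Set.Ioo xi xf, f x * Real.log (f x / h x) := by
  rw [neg_mul, ← integral_const_mul, neg_inj]
  apply setIntegral_congr_fun measurableSet_Ioo
  intro x hx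
  dsimp only
  have hf0 := hposf x hx
  have hh0 := hposh x hx
  have hdiv : 0 < f x / h x := div_pos hf0 hh0
  rw [Real.log_rpow hdiv, Real.div_rpow hf0.le hh0.le]
  have hfa : f x ^ α * f x ^ (1 - α) = f x := by
    rw [← Real.rpow_add hf0]; norm_num
  have key : f x ^ α / h x ^ α * (f x ^ (1 - α) * h x ^ α) = f x := by
    have : f x ^ α / h x ^ α * (f x ^ (1 - α) * h x ^ α)
        = f x ^ α * f x ^ (1 - α) * (h x ^ α / h x ^ α) := by ring
    rw [this, div_self (ne_of_gt (Real.rpow_pos_of_pos hh0 α)), mul_one, hfa]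
  calc f x ^ α / h x ^ α * (α * Real.log (f x / h x)) * (f x ^ (1 - α) * h x ^ α)
      = α * (f x ^ α / h x ^ α * (f x ^ (1 - α) * h x ^ α) * Real.log (f x / h x)) := by ring
    _ = α * (f x * Real.log (f x / h x)) := by rw [key]
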